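/- Let A be a {0,1}-valued n×n matrix. Define 2-marginals for 3-tables of size (n,n,2) by v_{i,j,+} := A_{i,j}, v_{i,+,1} := 1, v_{+,j,1} := 1, v_{i,+,2} := A_{i,+} − 1, v_{+,j,2} := A_{+,j} − 1 for all 1 ≤ i,j ≤ n (assuming all row sums A_{i,+} and column sums A_{+,j} are at least 1). Then the number of nonnegative integer 3-tables of size (n,n,2) satisfying all these 2-marginals equals the permanent of A. -/

import Mathlib

/-!
The first layer of a table with these marginals is a nonnegative integer matrix all of whose
line sums are `1`, i.e. a permutation matrix `P_σ`. The marginal `x_{i,j,+} = A_{i,j}` forces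
`P_σ ≤ A` and determines the second layer as `A - P_σ`, whose line sums are then automatically
`A_{i,+} - 1` and `A_{+,j} - 1`. Hence the tables correspond bijectively to the permutations `σ`
with `A_{i,σ(i)} ≠ 0` for all `i`, and for a `0/1` matrix these are counted by the permanent.
-/

open Finset Matrix Equiv

variable {ι : Type*} [DecidableEq ι]

lemma Equiv.Perm.permMatrix_apply (σ : Perm ι) (i : ι) :
    σ.permMatrix ℕ i = Pi.single (σ i) 1 :=
  PEquiv.toMatrix_toPEquiv_apply σ i

lemma Equiv.Perm.permMatrix_injective :
    Function.Injective (fun σ : Perm ι => σ.permMatrix ℕ) := by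
  intro σ τ h
  ext i
  simpa [Perm.permMatrix_apply, Pi.single_apply, eq_comm] using congrFun (congrFun h i) (σ i)

lemma Equiv.Perm.permMatrix_le_iff {σ : Perm ι} {A : Matrix ι ι ℕ} :
    (∀ i j, σ.permMatrix ℕ i j ≤ A i j) ↔ ∀ i, A i (σ i) ≠ 0 := by
  simp only [Perm.permMatrix_apply, Pi.single_apply]
  refine ⟨fun h i => Nat.one_le_iff_ne_zero.1 (by simpa using h i (σ i)), fun h i j => ?_⟩
  split_ifs with hj
  · exact Nat.one_le_iff_ne_zero.2 (hj ▸ h i)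
  · exact Nat.zero_le _

def permTable (A : Matrix ι ι ℕ) (σ : Perm ι) : ι → ι → Fin 2 → ℕ :=
  fun i j => ![σ.permMatrix ℕ i j, A i j - σ.permMatrix ℕ i j]

lemma permTable_injective (A : Matrix ι ι ℕ) : Function.Injective (permTable A) := by
  intro σ τ h
  exact Perm.permMatrix_injective (funext₂ fun i j => congrFun (congrFun₂ h i j) 0)

variable [Fintype ι]

lemma Fintype.exists_eq_single_of_sum_eq_one {f : ι → ℕ} (h : ∑ i, f i = 1) :
    ∃ i, f = Pi.single i 1 := by
  obtain ⟨i, hi⟩ := (Finsupp.sum_eq_one_iff (Finsupp.equivFunOnFinite.symm f)).1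
    (by rwa [Finsupp.sum_fintype _ _ fun _ => rfl])
  exact ⟨i, by simpa using congrArg Finsupp.equivFunOnFinite hi⟩

lemma mem_doublyStochastic_nat_iff {M : Matrix ι ι ℕ} :
    M ∈ doublyStochastic ℕ ι ↔ ∃ σ : Perm ι, σ.permMatrix ℕ = M := by
  refine ⟨fun hM => ?_, fun ⟨σ, hσ⟩ => hσ ▸ permMatrix_mem_doublyStochastic⟩
  obtain ⟨-, hrow, hcol⟩ := mem_doublyStochastic_iff_sum.1 hM
  choose g hg using fun i => Fintype.exists_eq_single_of_sum_eq_one (hrow i)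
  have hsurj : Function.Surjective g := by
    intro j
    obtain ⟨i, -, hi⟩ := exists_ne_zero_of_sum_ne_zero (hcol j ▸ one_ne_zero)
    rw [hg i, Pi.single_apply] at hi
    exact ⟨i, by_contra fun h => hi (if_neg (Ne.symm h))⟩
  refine ⟨.ofBijective g hsurj.bijective_of_finite, ?_⟩
  ext i : 1
  rw [Perm.permMatrix_apply, hg i]
  rfl

def marginalTables (A : Matrix ι ι ℕ) : Set (ι → ι → Fin 2 → ℕ) :=
  {x | (∀ i j, ∑ k, x i j k = A i j) ∧
    (∀ i, ∑ j, x i j 0 = 1) ∧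
    (∀ j, ∑ i, x i j 0 = 1) ∧
    (∀ i, ∑ j, x i j 1 = (∑ j, A i j) - 1) ∧
    (∀ j, ∑ i, x i j 1 = (∑ i, A i j) - 1)}

lemma mem_marginalTables_iff {A : Matrix ι ι ℕ} {x : ι → ι → Fin 2 → ℕ} :
    x ∈ marginalTables A ↔ of (fun i j => x i j 0) ∈ doublyStochastic ℕ ι ∧
      (∀ i j, x i j 0 ≤ A i j) ∧ ∀ i j, x i j 1 = A i j - x i j 0 := by
  simp only [marginalTables, Set.mem_ofPred_eq, mem_doublyStochastic_iff_sum, of_apply,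
    Fin.sum_univ_two, zero_le, implies_true, true_and]
  constructor
  · rintro ⟨hsum, hrow, hcol, -, -⟩
    exact ⟨⟨hrow, hcol⟩, fun i j => hsum i j ▸ Nat.le_add_right _ _,
      fun i j => by rw [← hsum i j, Nat.add_sub_cancel_left]⟩
  · rintro ⟨⟨hrow, hcol⟩, hle, hx⟩
    simp only [hx]
    refine ⟨fun i j => Nat.add_sub_cancel' (hle i j), hrow, hcol, fun i => ?_, fun j => ?_⟩
    · rw [sum_tsub_distrib _ fun j _ => hle i j, hrow]
    · rw [sum_tsub_distrib _ fun i _ => hle i j, hcol]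

lemma marginalTables_eq_image (A : Matrix ι ι ℕ) :
    marginalTables A = permTable A '' {σ | ∀ i, A i (σ i) ≠ 0} := by
  ext x
  rw [mem_marginalTables_iff, mem_doublyStochastic_nat_iff]
  constructor
  · rintro ⟨⟨σ, hσ⟩, hle, hx⟩
    have hσ' : ∀ i j, σ.permMatrix ℕ i j = x i j 0 := fun i j => congrFun₂ hσ i j
    refine ⟨σ, Perm.permMatrix_le_iff.1 fun i j => hσ' i j ▸ hle i j, ?_⟩
    funext i j k
    fin_cases k
    · exact hσ' i j
    · show A i j - σ.permMatrix ℕ i j = x i j 1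
      rw [hx, hσ']
  · rintro ⟨σ, hσ, rfl⟩
    exact ⟨⟨σ, rfl⟩, Perm.permMatrix_le_iff.2 hσ, fun i j => rfl⟩

lemma ncard_marginalTables (A : Matrix ι ι ℕ) :
    (marginalTables A).ncard = #{σ : Perm ι | ∀ i, A i (σ i) ≠ 0} := by
  rw [marginalTables_eq_image, Set.ncard_image_of_injective _ (permTable_injective A),
    ← Set.ncard_coe_finset, coe_filter_univ]

lemma sum_prod_eq_card_of_le_one {A : Matrix ι ι ℕ} (hA : ∀ i j, A i j ≤ 1) :
    ∑ σ : Perm ι, ∏ i, A i (σ i) = #{σ : Perm ι | ∀ i, A i (σ i) ≠ 0} := by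
  have hA' : ∀ i j, A i j = if A i j ≠ 0 then 1 else 0 := fun i j => by
    have := hA i j; split_ifs <;> omega
  simp_rw [card_filter]
  refine sum_congr rfl fun σ _ => ?_
  conv_lhs => enter [2, i]; rw [hA' i (σ i)]
  rw [prod_boole]
  simp only [mem_univ, forall_const]

theorem count_tables_eq_permanent (n : ℕ) (A : Fin n → Fin n → ℕ)
    (hA : ∀ i j, A i j ≤ 1) :
    Set.ncard {x : Fin n → Fin n → Fin 2 → ℕ |
      (∀ i j, ∑ k, x i j k = A i j) ∧
      (∀ i, ∑ j, x i j 0 = 1) ∧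
      (∀ j, ∑ i, x i j 0 = 1) ∧
      (∀ i, ∑ j, x i j 1 = (∑ j, A i j) - 1) ∧
      (∀ j, ∑ i, x i j 1 = (∑ i, A i j) - 1)} =
    ∑ σ : Equiv.Perm (Fin n), ∏ i, A i (σ i) := by
  rw [sum_prod_eq_card_of_le_one hA]
  exact ncard_marginalTables A
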